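/- Let G be a directed acyclic graph on V = Fin n, let y ∈ V, let X ⊆ Pa_G(y), and let i ∈ V. If there exists a trek from i to y in the graph G_{X̄} obtained from G by deleting all arrows from a vertex of X to y, then there exist a matrix Λ supported on the arrows of G and a diagonal matrix Φ with positive diagonal entries such that Σ_{p ∈ Pa_G(y) \ X} Λ[p,y]·Σ[i,p] + ((I − Λ)⁻ᵀΦ)[i,y] ≠ 0, where Σ = (I − Λ)⁻ᵀ Φ (I − Λ)⁻¹. -/

import Mathlib

open Classical Matrix

/-- A trek in a directed graph given by the arrow relation `E`: a pair of
directed paths (nonempty lists of vertices) from a common top vertex. -/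
structure DTrek {n : ℕ} (E : Fin n → Fin n → Prop) where
  left : List (Fin n)
  right : List (Fin n)
  left_ne : left ≠ []
  right_ne : right ≠ []
  left_chain : left.Chain' E
  right_chain : right.Chain' E
  top_eq : left.head left_ne = right.head right_ne

namespace DTrek

variable {n : ℕ} {E : Fin n → Fin n → Prop}

/-- The top of a trek. -/
def top (t : DTrek E) : Fin n := t.left.head t.left_ne

/-- The left endpoint of a trek. -/
def src (t : DTrek E) : Fin n := t.left.getLast t.left_ne

/-- The right endpoint of a trek. -/
def dst (t : DTrek E) : Fin n := t.right.getLast t.right_ne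

end DTrek

/-- `(L, R)` t-separates the vertex sets `A` and `B` in the directed graph `E`:
every trek from `A` to `B` has a vertex of `L` on its left side or a vertex of
`R` on its right side. -/
def DTSep {n : ℕ} (E : Fin n → Fin n → Prop) (L R : Finset (Fin n))
    (A B : Set (Fin n)) : Prop :=
  ∀ t : DTrek E, t.src ∈ A → t.dst ∈ B →
    (∃ v ∈ L, v ∈ t.left) ∨ (∃ v ∈ R, v ∈ t.right)

/-- The directed graph `E` is acyclic. -/
def EAcyclic {n : ℕ} (E : Fin n → Fin n → Prop) : Prop :=
  ∀ v, ¬ Relation.TransGen E v v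

/-- `Λ` is supported on the arrows of `E`. -/
def SupportedOn {n : ℕ} (E : Fin n → Fin n → Prop)
    (Λ : Matrix (Fin n) (Fin n) ℝ) : Prop :=
  ∀ u v, ¬ E u v → Λ u v = 0

/-- The implied covariance matrix `Σ = (I − Λ)⁻ᵀ Φ (I − Λ)⁻¹` of an SEM. -/
noncomputable def impliedCov {n : ℕ} (Λ Φ : Matrix (Fin n) (Fin n) ℝ) :
    Matrix (Fin n) (Fin n) ℝ :=
  ((1 - Λ)⁻¹)ᵀ * Φ * (1 - Λ)⁻¹

/-- The covariance of variable `i` with the composite error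
`ε = Σ_{p ∈ Pa(y)\X} Λ[p,y]·x_p + ε_y` of the equation of `y`:
`Σ_{p ∈ Pa(y)\X} Λ[p,y]·Σ[i,p] + ((I − Λ)⁻ᵀΦ)[i,y]`. -/
noncomputable def errorCov {n : ℕ} (E : Fin n → Fin n → Prop)
    (Λ Φ : Matrix (Fin n) (Fin n) ℝ) (y : Fin n) (X : Finset (Fin n))
    (i : Fin n) : ℝ :=
  (∑ p ∈ Finset.univ.filter (fun p => E p y ∧ p ∉ X),
      Λ p y * impliedCov Λ Φ i p)
    + ((((1 - Λ)⁻¹)ᵀ * Φ : Matrix (Fin n) (Fin n) ℝ)) i y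

/-!
Put coefficient `1` on every arrow of `G` that survives the removal of `X → y`, `0` elsewhere,
and take `Φ = 1`. Since the coefficients of `X → y` vanish, the composite error of the equation
of `y` is `x_y` itself, so the covariance in question is `Σ[i, y]`. As `Λ ≥ 0` is nilpotent,
`B = (1 - Λ)⁻¹ = ∑ Λ ^ k` is entrywise nonnegative and positive along directed paths, and
`Σ[i, y] = ∑_c B[c, i] B[c, y] ≥ B[t, i] B[t, y] > 0` for the top `t` of the trek.
-/

theorem List.IsChain.nodup_of_irrefl_transGen {α : Type*} {R : α → α → Prop} {l : List α}
    (hR : ∀ a, ¬ Relation.TransGen R a a) (hl : l.IsChain R) : l.Nodup := by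
  have hpair : l.Pairwise (Relation.TransGen R) :=
    List.isChain_iff_pairwise.mp (hl.imp fun _ _ => Relation.TransGen.single)
  have : Std.Irrefl (Relation.TransGen R) := ⟨hR⟩
  exact hpair.nodup

namespace Matrix

variable {ι : Type*} [Fintype ι] [DecidableEq ι]

theorem exists_isChain_of_pow_apply_ne_zero {α : Type*} [Semiring α] {R : ι → ι → Prop}
    {Λ : Matrix ι ι α} (hΛ : ∀ u v, ¬ R u v → Λ u v = 0) (k : ℕ) (u v : ι)
    (h : (Λ ^ k) u v ≠ 0) : ∃ l : List ι, l.IsChain R ∧ l.length = k + 1 ∧ l.head? = some u := by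
  induction k generalizing u with
  | zero =>
    obtain rfl : u = v := by_contra fun huv => h (by simp [one_apply_ne huv])
    exact ⟨[u], List.isChain_singleton u, rfl, rfl⟩
  | succ k ih =>
    rw [pow_succ', mul_apply] at h
    obtain ⟨w, -, hw⟩ := Finset.exists_ne_zero_of_sum_ne_zero h
    have huw : R u w := by_contra fun hR => hw (by rw [hΛ u w hR, zero_mul])
    obtain ⟨_ | ⟨w', l⟩, hl, hlen, hhead⟩ := ih w (right_ne_zero_of_mul hw)
    · simp at hlen
    · obtain rfl : w' = w := Option.some_inj.mp hhead
      exact ⟨u :: w' :: l, List.isChain_cons_cons.mpr ⟨huw, hl⟩, by simpa using hlen, rfl⟩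

/-- A nonzero entry of `Λ ^ k` yields a walk of `k + 1` pairwise distinct vertices. -/
theorem isNilpotent_of_acyclic {α : Type*} [Semiring α] {R : ι → ι → Prop}
    (hR : ∀ v, ¬ Relation.TransGen R v v) {Λ : Matrix ι ι α}
    (hΛ : ∀ u v, ¬ R u v → Λ u v = 0) : IsNilpotent Λ := by
  refine ⟨Fintype.card ι, ?_⟩
  ext u v
  by_contra h
  obtain ⟨l, hl, hlen, -⟩ := exists_isChain_of_pow_apply_ne_zero hΛ _ u v h
  have := (hl.nodup_of_irrefl_transGen hR).length_le_card
  omega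

section CommRing

variable {R : Type*} [CommRing R] {Λ : Matrix ι ι R}

theorem inv_one_sub_eq_sum_pow {m : ℕ} (h : Λ ^ m = 0) :
    (1 - Λ)⁻¹ = ∑ k ∈ Finset.range m, Λ ^ k := by
  refine inv_eq_left_inv ?_
  rw [← neg_sub Λ 1, mul_neg, geom_sum_mul, h, zero_sub, neg_neg]

theorem inv_one_sub_eq_one_add_mul (hΛ : IsNilpotent Λ) :
    (1 - Λ)⁻¹ = 1 + Λ * (1 - Λ)⁻¹ := by
  have h := mul_nonsing_inv (1 - Λ) ((isUnit_iff_isUnit_det _).mp hΛ.isUnit_one_sub)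
  rw [sub_mul, one_mul] at h
  exact sub_eq_iff_eq_add.mp h

end CommRing

section OrderedRing

variable {R : Type*} [CommRing R] [LinearOrder R] [IsStrictOrderedRing R] {Λ : Matrix ι ι R}

theorem inv_one_sub_apply_nonneg (hΛ : IsNilpotent Λ) (hnonneg : ∀ u v, 0 ≤ Λ u v) (u v : ι) :
    0 ≤ (1 - Λ)⁻¹ u v := by
  obtain ⟨m, hm⟩ := hΛ
  rw [inv_one_sub_eq_sum_pow hm, sum_apply]
  exact Finset.sum_nonneg fun k _ => pow_apply_nonneg hnonneg k u v

theorem inv_one_sub_apply_pos (hΛ : IsNilpotent Λ) (hnonneg : ∀ u v, 0 ≤ Λ u v) {u v : ι}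
    (huv : Relation.ReflTransGen (fun a b => 0 < Λ a b) u v) : 0 < (1 - Λ)⁻¹ u v := by
  have hB := inv_one_sub_apply_nonneg hΛ hnonneg
  have hΛB : ∀ a b, 0 ≤ (Λ * (1 - Λ)⁻¹) a b := fun a b =>
    Finset.sum_nonneg fun c _ => mul_nonneg (hnonneg a c) (hB c b)
  induction huv using Relation.ReflTransGen.head_induction_on with
  | refl =>
    rw [inv_one_sub_eq_one_add_mul hΛ, add_apply, one_apply_eq]
    linarith [hΛB v v]
  | @head a c hac _ hcv =>
    have hstep : Λ a c * (1 - Λ)⁻¹ c v ≤ (Λ * (1 - Λ)⁻¹) a v :=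
      Finset.single_le_sum (fun w _ => mul_nonneg (hnonneg a w) (hB w v)) (Finset.mem_univ c)
    have hone : (0 : R) ≤ (1 : Matrix ι ι R) a v := by
      by_cases hav : a = v <;> simp [one_apply, hav]
    rw [inv_one_sub_eq_one_add_mul hΛ, add_apply]
    linarith [mul_pos hac hcv]

end OrderedRing

end Matrix

namespace DTrek

variable {n : ℕ} {E : Fin n → Fin n → Prop}

theorem reflTransGen_top_src (t : DTrek E) : Relation.ReflTransGen E t.top t.src :=
  List.relationReflTransGen_of_exists_isChain t.left t.left_chain t.left_ne

theorem reflTransGen_top_dst (t : DTrek E) : Relation.ReflTransGen E t.top t.dst := by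
  rw [top, t.top_eq]
  exact List.relationReflTransGen_of_exists_isChain t.right t.right_chain t.right_ne

end DTrek

section Covariance

variable {n : ℕ} {Λ : Matrix (Fin n) (Fin n) ℝ}

theorem impliedCov_one_apply_pos (hΛ : IsNilpotent Λ) (hnonneg : ∀ u v, 0 ≤ Λ u v)
    {t a b : Fin n} (hta : Relation.ReflTransGen (fun u v => 0 < Λ u v) t a)
    (htb : Relation.ReflTransGen (fun u v => 0 < Λ u v) t b) : 0 < impliedCov Λ 1 a b := by
  have hB := Matrix.inv_one_sub_apply_nonneg hΛ hnonneg
  rw [impliedCov, Matrix.mul_one, Matrix.mul_apply]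
  calc 0 < (1 - Λ)⁻¹ t a * (1 - Λ)⁻¹ t b :=
        mul_pos (Matrix.inv_one_sub_apply_pos hΛ hnonneg hta)
          (Matrix.inv_one_sub_apply_pos hΛ hnonneg htb)
    _ ≤ ∑ c, ((1 - Λ)⁻¹)ᵀ a c * (1 - Λ)⁻¹ c b :=
        Finset.single_le_sum (fun c _ => mul_nonneg (hB c a) (hB c b)) (Finset.mem_univ t)

theorem errorCov_eq_impliedCov {E : Fin n → Fin n → Prop} (hsupp : SupportedOn E Λ)
    (hΛ : IsNilpotent Λ) (Φ : Matrix (Fin n) (Fin n) ℝ) {y : Fin n} {X : Finset (Fin n)}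
    (hX : ∀ p ∈ X, Λ p y = 0) (i : Fin n) : errorCov E Λ Φ y X i = impliedCov Λ Φ i y := by
  have hsum : ∑ p ∈ Finset.univ.filter (fun p => E p y ∧ p ∉ X), Λ p y * impliedCov Λ Φ i p
      = (impliedCov Λ Φ * Λ) i y := by
    rw [Finset.sum_filter_of_ne, mul_apply]
    · exact Finset.sum_congr rfl fun p _ => mul_comm _ _
    · intro p _ hp
      exact ⟨by_contra fun hE => left_ne_zero_of_mul hp (hsupp p y hE),
        fun hpX => left_ne_zero_of_mul hp (hX p hpX)⟩
  have hB : (1 - Λ)⁻¹ * Λ + 1 = (1 - Λ)⁻¹ := by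
    have h := nonsing_inv_mul (1 - Λ) ((isUnit_iff_isUnit_det _).mp hΛ.isUnit_one_sub)
    rw [mul_sub, mul_one] at h
    rw [add_comm]
    exact (sub_eq_iff_eq_add.mp h).symm
  have hcov : impliedCov Λ Φ * Λ + ((1 - Λ)⁻¹)ᵀ * Φ = impliedCov Λ Φ := by
    calc _ = ((1 - Λ)⁻¹)ᵀ * Φ * ((1 - Λ)⁻¹ * Λ + 1) := by
          simp only [impliedCov, Matrix.mul_add, Matrix.mul_one, Matrix.mul_assoc]
      _ = impliedCov Λ Φ := by rw [hB, impliedCov]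
  rw [errorCov, hsum, ← Matrix.add_apply, hcov]

end Covariance

theorem trek_implies_nonzero_error_covariance_general
    {n : ℕ} (E : Fin n → Fin n → Prop) (hacyc : EAcyclic E)
    (y : Fin n) (X : Finset (Fin n)) (i : Fin n)
    (htrek : ∃ t : DTrek (fun u v => E u v ∧ ¬ (u ∈ X ∧ v = y)),
      t.src = i ∧ t.dst = y) :
    ∃ Λ Φ : Matrix (Fin n) (Fin n) ℝ,
      SupportedOn E Λ ∧ (∀ u v, u ≠ v → Φ u v = 0) ∧ (∀ u, 0 < Φ u u) ∧
      errorCov E Λ Φ y X i ≠ 0 := by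
  obtain ⟨t, rfl, hdst⟩ := htrek
  let Λ : Matrix (Fin n) (Fin n) ℝ := .of fun u v => if E u v ∧ ¬ (u ∈ X ∧ v = y) then 1 else 0
  have hsupp : SupportedOn E Λ := fun u v huv => if_neg fun h => huv h.1
  have hnonneg : ∀ u v, 0 ≤ Λ u v := fun u v => by dsimp only [Λ, of_apply]; split_ifs <;> norm_num
  have hnil : IsNilpotent Λ := Matrix.isNilpotent_of_acyclic hacyc hsupp
  have hpath : ∀ u v, Relation.ReflTransGen (fun u v => E u v ∧ ¬ (u ∈ X ∧ v = y)) u v →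
      Relation.ReflTransGen (fun u v => 0 < Λ u v) u v :=
    Relation.ReflTransGen.mono fun u v huv => by simp only [Λ, of_apply, if_pos huv, zero_lt_one]
  refine ⟨Λ, 1, hsupp, fun u v => one_apply_ne, fun u => by simp, ?_⟩
  rw [errorCov_eq_impliedCov hsupp hnil 1 (fun p hp => if_neg fun h => h.2 ⟨hp, rfl⟩)]
  have htop_y := t.reflTransGen_top_dst
  rw [hdst] at htop_y
  exact (impliedCov_one_apply_pos hnil hnonneg (hpath _ _ t.reflTransGen_top_src)
    (hpath _ _ htop_y)).ne'

/-- if a trek from `i` to `y` survives the deletion of all arrows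
from `X` to `y`, then for some parameter values the covariance of `i` with the
composite error of the equation of `y` is nonzero. -/
theorem trek_implies_nonzero_error_covariance
    {n : ℕ} (E : Fin n → Fin n → Prop) (hacyc : EAcyclic E)
    (y : Fin n) (X : Finset (Fin n)) (hX : ∀ x ∈ X, E x y) (i : Fin n)
    (htrek : ∃ t : DTrek (fun u v => E u v ∧ ¬ (u ∈ X ∧ v = y)),
      t.src = i ∧ t.dst = y) :
    ∃ Λ Φ : Matrix (Fin n) (Fin n) ℝ,
      SupportedOn E Λ ∧ (∀ u v, u ≠ v → Φ u v = 0) ∧ (∀ u, 0 < Φ u u) ∧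
      errorCov E Λ Φ y X i ≠ 0 :=
  trek_implies_nonzero_error_covariance_general E hacyc y X i htrek
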